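/- arXiv:2204.12719 — 2 statements merged into one kernel-verified Lean document; each statement's English description precedes it below -/
import Mathlib

section
/- Assume the open convex sets Ω₀ and Ω₁ satisfy the strict convexity condition; in the case d = 2 assume additionally the cone condition. Then for every x ∈ Ω* = cl(Ω₀) \ cl(Ω₁) there exists a function φ ∈ A° with ⟨φ⟩_𝕋 = x. -/
noncomputable section

/-- The cone condition: every ray contained in `Ω₀` has a translate contained in `Ω₁`. -/
def ConeCondition {d : ℕ} (Ω₀ Ω₁ : Set (EuclideanSpace ℝ (Fin d))) : Prop :=
  ∀ x v : EuclideanSpace ℝ (Fin d), v ≠ 0 →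
    (∀ t : ℝ, 0 ≤ t → x + t • v ∈ Ω₀) →
    ∃ y : EuclideanSpace ℝ (Fin d), ∀ t : ℝ, 0 ≤ t → y + t • v ∈ Ω₁
/-- The average `⟨φ⟩_{(a,b)}` of a function over the interval `(a,b)`. -/
noncomputable def intervalAvg {d : ℕ} (a b : ℝ) (φ : ℝ → EuclideanSpace ℝ (Fin d)) :
    EuclideanSpace ℝ (Fin d) :=
  (b - a)⁻¹ • ∫ t in Set.Ioo a b, φ t
/-- The class `A°`: summable `1`-periodic functions (functions on the circle of unit length)
with values in `∂Ω₀`, for which there is an open set `W` with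
`cl Ω₁ ⊆ W`, `cl W ⊆ Ω₀`, such that all interval averages avoid `W`. -/
def MemClassACirc {d : ℕ} (Ω₀ Ω₁ : Set (EuclideanSpace ℝ (Fin d)))
    (φ : ℝ → EuclideanSpace ℝ (Fin d)) : Prop :=
  Function.Periodic φ 1 ∧
  MeasureTheory.IntegrableOn φ (Set.Ioo 0 1) ∧
  (∀ t : ℝ, φ t ∈ frontier Ω₀) ∧
  ∃ W : Set (EuclideanSpace ℝ (Fin d)), IsOpen W ∧ closure Ω₁ ⊆ W ∧ closure W ⊆ Ω₀ ∧
    ∀ a b : ℝ, a < b → intervalAvg a b φ ∉ W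

/-!
If `x ∈ ∂Ω₀`, the constant function `x` works. If `x ∈ Ω₀ \ cl Ω₁`, let `p` be the point of
`cl Ω₁` nearest to `x`; the hyperplane `H` through `x` orthogonal to `x - p` misses `cl Ω₁`.
Some line through `x` parallel to `H` leaves `Ω₀` in both directions: for `d ≥ 3` because the
unit sphere of `H - x` is connected while `cl Ω₀`, being strictly convex and proper, contains no
line; for `d = 2` because a ray parallel to `H` inside `Ω₀` would, by the cone condition, give a
ray in `cl Ω₁` from `p` along the supporting hyperplane, contradicting strict convexity of
`cl Ω₁`. The line meets `∂Ω₀` in points `y₀`, `y₁` with `x` between them, and the periodic step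
function taking these two values in the right proportions has mean `x`. All its interval
averages lie in the segment `[y₀, y₁] ⊆ H`, a closed set disjoint from `cl Ω₁`, so a
neighbourhood of `cl Ω₁` with closure in `Ω₀` avoids them.
-/

open Set MeasureTheory Metric Filter Topology Module
open scoped RealInnerProductSpace

section Rays

variable {E : Type*} [NormedAddCommGroup E] [NormedSpace ℝ E] {S : Set E} {x p q v : E}

lemma isClosed_segment (x y : E) : IsClosed (segment ℝ x y) :=
  convexHull_pair (𝕜 := ℝ) x y ▸ ((toFinite {x, y}).isCompact_convexHull ℝ).isClosed

def rayDirections (S : Set E) (x : E) : Set E :=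
  {v | ∀ t : ℝ, 0 ≤ t → x + t • v ∈ S}

lemma rayDirections_mono {T : Set E} (h : S ⊆ T) : rayDirections S x ⊆ rayDirections T x :=
  fun _ hv t ht => h (hv t ht)

lemma mem_of_mem_rayDirections (hv : v ∈ rayDirections S x) : x ∈ S := by
  simpa using hv 0 le_rfl

lemma isClosed_rayDirections (hS : IsClosed S) (x : E) : IsClosed (rayDirections S x) := by
  simp only [rayDirections, ofPred_forall]
  exact isClosed_biInter fun t _ =>
    hS.preimage (continuous_const.add (continuous_const.smul continuous_id))

lemma Convex.rayDirections_subset (hconv : Convex ℝ S) (hS : IsClosed S) (hp : p ∈ S) :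
    rayDirections S q ⊆ rayDirections S p := by
  intro v hv t ht
  -- `p + t • v` is the limit, as `s → 0⁺`, of `(1 - s) • p + s • (q + (t / s) • v) ∈ S`.
  have hlim : Tendsto (fun s : ℝ => p + t • v + s • (q - p)) (𝓝[>] 0) (𝓝 (p + t • v)) := by
    refine tendsto_nhdsWithin_of_tendsto_nhds ?_
    exact (by fun_prop : Continuous fun s : ℝ => p + t • v + s • (q - p)).tendsto' 0 _ (by simp)
  refine hS.mem_of_tendsto hlim ?_
  filter_upwards [Ioo_mem_nhdsGT one_pos] with s ⟨hs0, hs1⟩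
  have hmem := hconv hp (hv (t / s) (by positivity)) (sub_nonneg.2 hs1.le) hs0.le (by ring)
  convert hmem using 1
  rw [smul_add, smul_smul, mul_div_cancel₀ _ hs0.ne']
  module

lemma Convex.rayDirections_closure_subset {Ω : Set E} (hΩ : IsOpen Ω) (hconv : Convex ℝ Ω)
    (hx : x ∈ Ω) : rayDirections (closure Ω) x ⊆ rayDirections Ω x := by
  intro v hv t ht
  have hseg : x + t • v ∈ openSegment ℝ x (x + (2 * t) • v) :=
    ⟨1 / 2, 1 / 2, by norm_num, by norm_num, by norm_num, by module⟩
  simpa [hΩ.interior_eq] using hconv.openSegment_interior_closure_subset_interior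
    (by rwa [hΩ.interior_eq]) (hv (2 * t) (by positivity)) hseg

lemma Convex.closure_ne_univ {Ω : Set E} (hconv : Convex ℝ Ω) (hΩ : IsOpen Ω) (hne : Ω ≠ univ) :
    closure Ω ≠ univ := by
  intro h
  have hΩne : (interior Ω).Nonempty := by
    rw [hΩ.interior_eq, ← closure_nonempty_iff, h]
    exact univ_nonempty
  apply hne
  rw [← hΩ.interior_eq, ← hconv.interior_closure_eq_interior_of_nonempty_interior hΩne, h,
    interior_univ]

lemma StrictConvex.neg_notMem_rayDirections (hsc : StrictConvex ℝ S) (hS : IsClosed S)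
    (hne : S ≠ univ) (hv0 : v ≠ 0) (hv : v ∈ rayDirections S x) : -v ∉ rayDirections S x := by
  intro hnv
  -- every `z ∈ S` is the midpoint of `z + v, z - v ∈ S`, so `S` is open, hence clopen
  have hint : S ⊆ interior S := by
    intro z hz
    have hz₁ : z + v ∈ S := by
      simpa using hsc.convex.rayDirections_subset hS hz hv 1 zero_le_one
    have hz₂ : z + -v ∈ S := by
      simpa using hsc.convex.rayDirections_subset hS hz hnv 1 zero_le_one
    have hdiff : z + v ≠ z + -v := by
      simpa [eq_neg_iff_add_eq_zero, ← two_smul ℝ v] using hv0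
    convert hsc hz₁ hz₂ hdiff (half_pos one_pos) (half_pos one_pos) (add_halves 1) using 1
    module
  have hclopen : IsClopen S := ⟨hS, interior_eq_iff_isOpen.1 (interior_subset.antisymm hint)⟩
  exact hne (hclopen.eq_univ ⟨x, mem_of_mem_rayDirections hv⟩)

lemma mem_openSegment_add_smul_add_smul_neg (u : E) {a b : ℝ} (ha : 0 < a)
    (hb : 0 < b) : x ∈ openSegment ℝ (x + a • u) (x + b • -u) := by
  refine ⟨b / (a + b), a / (a + b), by positivity, by positivity, by field_simp; ring, ?_⟩
  match_scalars <;> field_simp <;> ring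

lemma exists_pos_add_smul_mem_frontier {Ω : Set E} (hΩ : IsOpen Ω) (hx : x ∈ Ω)
    (hv : v ∉ rayDirections Ω x) : ∃ t : ℝ, 0 < t ∧ x + t • v ∈ frontier Ω := by
  obtain ⟨T, hT, hxT⟩ : ∃ T : ℝ, 0 ≤ T ∧ x + T • v ∉ Ω := by
    simpa [rayDirections] using hv
  by_contra! hfr
  have hconn : IsPreconnected ((fun t : ℝ => x + t • v) '' Icc 0 T) :=
    isPreconnected_Icc.image _ (by fun_prop)
  refine hxT (hconn.subset_of_closure_inter_subset hΩ ⟨x, ⟨0, ⟨le_rfl, hT⟩, by simp⟩, hx⟩ ?_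
    ⟨T, ⟨hT, le_rfl⟩, rfl⟩)
  rintro _ ⟨hcl, t, ⟨ht, -⟩, rfl⟩
  rcases ht.eq_or_lt with rfl | ht
  · simpa using hx
  · rw [closure_eq_self_union_frontier] at hcl
    exact hcl.resolve_right (hfr t ht)

end Rays

section InnerProduct

variable {E : Type*} [NormedAddCommGroup E] [InnerProductSpace ℝ E]

lemma StrictConvex.inner_sub_neg {K : Set E} (hK : StrictConvex ℝ K) {p q n : E} (hp : p ∈ K)
    (hq : q ∈ K) (hpq : p ≠ q) (hn : n ≠ 0) (hsupp : ∀ a ∈ K, ⟪n, a - p⟫ ≤ 0) :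
    ⟪n, q - p⟫ < 0 := by
  set m : E := (1 / 2 : ℝ) • p + (1 / 2 : ℝ) • q
  have hm : m ∈ interior K := hK hp hq hpq (half_pos one_pos) (half_pos one_pos) (add_halves 1)
  -- `m` can be pushed a little along `n` inside `K`; `hsupp` there bounds `⟪n, q - p⟫ / 2`
  have hev : ∀ᶠ c in 𝓝 (0 : ℝ), m + c • n ∈ K :=
    ((by fun_prop : Continuous fun c : ℝ => m + c • n).tendsto' 0 m (by simp)).eventually
      (mem_interior_iff_mem_nhds.1 hm)
  obtain ⟨c, hcK, hc⟩ := ((hev.filter_mono nhdsWithin_le_nhds).and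
    (self_mem_nhdsWithin : Ioi (0 : ℝ) ∈ 𝓝[>] 0)).exists
  have hle := hsupp _ hcK
  have hdecomp : m + c • n - p = (1 / 2 : ℝ) • (q - p) + c • n := by module
  rw [hdecomp, inner_add_right, real_inner_smul_right, real_inner_smul_right,
    real_inner_self_eq_norm_sq] at hle
  nlinarith [norm_pos_iff.2 hn, mul_pos (mem_Ioi.1 hc) (pow_pos (norm_pos_iff.2 hn) 2)]

lemma exists_inner_sub_nonpos [CompleteSpace E] {K : Set E} (hne : K.Nonempty)
    (hK : IsClosed K) (hconv : Convex ℝ K) (x : E) : ∃ p ∈ K, ∀ a ∈ K, ⟪x - p, a - p⟫ ≤ 0 := by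
  obtain ⟨p, hp, hmin⟩ := exists_norm_eq_iInf_of_complete_convex hne hK.isComplete hconv x
  exact ⟨p, hp, (norm_eq_iInf_iff_real_inner_le_zero hconv hp).1 hmin⟩

lemma finrank_le_finrank_orthogonal_span_singleton_add_one [FiniteDimensional ℝ E] (n : E) :
    finrank ℝ E ≤ finrank ℝ (ℝ ∙ n)ᗮ + 1 := by
  have h := finrank_span_le_card (R := ℝ) ({n} : Set E)
  rw [← (ℝ ∙ n).finrank_add_finrank_orthogonal]
  simp only [toFinset_singleton, Finset.card_singleton] at h
  omega

lemma exists_ne_zero_inner_eq_zero [FiniteDimensional ℝ E] (hE : 2 ≤ finrank ℝ E) (n : E) :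
    ∃ u : E, u ≠ 0 ∧ ⟪n, u⟫ = 0 := by
  have hK : (ℝ ∙ n)ᗮ ≠ ⊥ := by
    rw [Ne, ← Submodule.finrank_eq_zero]
    have := finrank_le_finrank_orthogonal_span_singleton_add_one n
    omega
  obtain ⟨u, hu, hu0⟩ := Submodule.exists_mem_ne_zero_of_ne_bot hK
  exact ⟨u, hu0, Submodule.inner_right_of_mem_orthogonal (Submodule.mem_span_singleton_self n) hu⟩

/-- The unit sphere is connected, so it is not the union of the disjoint closed sets `A` and
`-A`. -/
lemma exists_mem_sphere_notMem_of_neg_notMem {F : Type*} [NormedAddCommGroup F]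
    [NormedSpace ℝ F] (hF : 1 < Module.rank ℝ F) {A : Set F} (hA : IsClosed A)
    (hA' : ∀ w ∈ sphere (0 : F) 1, w ∈ A → -w ∉ A) :
    ∃ w ∈ sphere (0 : F) 1, w ∉ A ∧ -w ∉ A := by
  by_contra! hcover
  have hneg : ∀ {w : F}, w ∈ sphere (0 : F) 1 → -w ∈ sphere (0 : F) 1 := by simp
  obtain ⟨w₀, hw₀⟩ := (isConnected_sphere hF 0 zero_le_one).nonempty
  obtain ⟨w₁, hw₁, hw₁A⟩ : ∃ w ∈ sphere (0 : F) 1, w ∈ A := by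
    by_cases h : w₀ ∈ A
    exacts [⟨w₀, hw₀, h⟩, ⟨-w₀, hneg hw₀, hcover w₀ hw₀ h⟩]
  obtain ⟨w, hw, hwA, hwA'⟩ := isPreconnected_closed_iff.1
    (isConnected_sphere hF 0 zero_le_one).isPreconnected A (-A) hA hA.neg
    (fun w hw => (em (w ∈ A)).imp id fun h => by simpa using hcover w hw h)
    ⟨w₁, hw₁, hw₁A⟩ ⟨-w₁, hneg hw₁, by simpa using hw₁A⟩
  exact hA' w hw hwA (by simpa using hwA')

lemma exists_inner_eq_zero_notMem_rayDirections [FiniteDimensional ℝ E]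
    (hE : 3 ≤ finrank ℝ E) {S : Set E} (hsc : StrictConvex ℝ S) (hS : IsClosed S)
    (hne : S ≠ univ) (n x : E) :
    ∃ u : E, u ≠ 0 ∧ ⟪n, u⟫ = 0 ∧ u ∉ rayDirections S x ∧ -u ∉ rayDirections S x := by
  have hK : 1 < Module.rank ℝ (ℝ ∙ n)ᗮ := by
    rw [← finrank_eq_rank]
    have := finrank_le_finrank_orthogonal_span_singleton_add_one n
    exact_mod_cast (by omega : 1 < finrank ℝ (ℝ ∙ n)ᗮ)
  have hcoe : ∀ w ∈ sphere (0 : (ℝ ∙ n)ᗮ) 1, (w : E) ≠ 0 := fun w hw =>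
    (Submodule.coe_eq_zero).not.2 (ne_of_mem_sphere hw one_ne_zero)
  obtain ⟨w, hw, hwA, hwA'⟩ := exists_mem_sphere_notMem_of_neg_notMem hK
    ((isClosed_rayDirections hS x).preimage continuous_subtype_val)
    fun w hw hwA => by
      simpa using hsc.neg_notMem_rayDirections hS hne (hcoe w hw) hwA
  exact ⟨w, hcoe w hw, Submodule.inner_right_of_mem_orthogonal
    (Submodule.mem_span_singleton_self n) w.2, hwA, by simpa using hwA'⟩

end InnerProduct

section FractStep

variable {E : Type*} {lam : ℝ} {y₀ y₁ : E}

def fractStep (lam : ℝ) (y₁ y₀ : E) (t : ℝ) : E :=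
  if Int.fract t < lam then y₁ else y₀

lemma fractStep_periodic : Function.Periodic (fractStep lam y₁ y₀) 1 := by
  intro t
  simp [fractStep, Int.fract_add_one]

lemma fractStep_eq_or (lam : ℝ) (y₁ y₀ : E) (t : ℝ) :
    fractStep lam y₁ y₀ t = y₁ ∨ fractStep lam y₁ y₀ t = y₀ := by
  unfold fractStep
  split_ifs <;> simp

variable [NormedAddCommGroup E]

lemma integrableOn_fractStep {s : Set ℝ} (hs : volume s ≠ ⊤) :
    IntegrableOn (fractStep lam y₁ y₀) s := by
  refine Measure.integrableOn_of_bounded hs ?_ (M := max ‖y₁‖ ‖y₀‖) (ae_of_all _ fun t => ?_)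
  · exact (StronglyMeasurable.ite (measurableSet_lt measurable_fract measurable_const)
      stronglyMeasurable_const stronglyMeasurable_const).aestronglyMeasurable
  · rcases fractStep_eq_or lam y₁ y₀ t with h | h <;> simp [h]

lemma setIntegral_Ioo_fractStep [NormedSpace ℝ E] [CompleteSpace E] (hlam0 : 0 < lam)
    (hlam1 : lam ≤ 1) :
    ∫ t in Ioo 0 1, fractStep lam y₁ y₀ t = lam • y₁ + (1 - lam) • y₀ := by
  have hon₁ : EqOn (fractStep lam y₁ y₀) (fun _ => y₁) (Ioo 0 lam) := fun t ht => by
    simp [fractStep, Int.fract_eq_self.2 ⟨ht.1.le, ht.2.trans_le hlam1⟩, ht.2]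
  have hon₀ : EqOn (fractStep lam y₁ y₀) (fun _ => y₀) (Ico lam 1) := fun t ht => by
    simp [fractStep, Int.fract_eq_self.2 ⟨hlam0.le.trans ht.1, ht.2⟩, not_lt.2 ht.1]
  have hdisj : Disjoint (Ioo 0 lam) (Ico lam 1) := disjoint_left.2 fun _ h₁ h₂ => h₂.1.not_gt h₁.2
  rw [← Ioo_union_Ico_eq_Ioo hlam0 hlam1, setIntegral_union hdisj measurableSet_Ico
      (integrableOn_fractStep measure_Ioo_lt_top.ne) (integrableOn_fractStep measure_Ico_lt_top.ne),
    setIntegral_congr_fun measurableSet_Ioo hon₁, setIntegral_congr_fun measurableSet_Ico hon₀,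
    setIntegral_const, setIntegral_const, Real.volume_real_Ioo_of_le hlam0.le,
    Real.volume_real_Ico_of_le hlam1, sub_zero]

end FractStep

section Construction

variable {d : ℕ} {Ω₀ Ω₁ : Set (EuclideanSpace ℝ (Fin d))}

lemma intervalAvg_mem {C : Set (EuclideanSpace ℝ (Fin d))} (hC : IsClosed C)
    (hconv : Convex ℝ C) {φ : ℝ → EuclideanSpace ℝ (Fin d)} {a b : ℝ} (hab : a < b)
    (hint : IntegrableOn φ (Ioo a b)) (hφ : ∀ t ∈ Ioo a b, φ t ∈ C) : intervalAvg a b φ ∈ C := by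
  have := hconv.set_average_mem hC (by simp [hab]) measure_Ioo_lt_top.ne
    (ae_restrict_of_forall_mem measurableSet_Ioo hφ) hint
  rwa [setAverage_eq, measureReal_def, Real.volume_Ioo, ENNReal.toReal_ofReal (by linarith)]
    at this

lemma memClassACirc_of_forall_mem {C : Set (EuclideanSpace ℝ (Fin d))} (h0open : IsOpen Ω₀)
    (hcl : closure Ω₁ ⊆ Ω₀) (hC : IsClosed C) (hconv : Convex ℝ C)
    (hC₁ : Disjoint C (closure Ω₁)) {φ : ℝ → EuclideanSpace ℝ (Fin d)}
    (hper : Function.Periodic φ 1) (hint : ∀ a b, IntegrableOn φ (Ioo a b))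
    (hφ : ∀ t, φ t ∈ frontier Ω₀ ∩ C) : MemClassACirc Ω₀ Ω₁ φ := by
  obtain ⟨W, hWo, hW₁, hWcl⟩ := normal_exists_closure_subset isClosed_closure
    (h0open.inter hC.isOpen_compl) (subset_inter hcl hC₁.subset_compl_left)
  refine ⟨hper, hint 0 1, fun t => (hφ t).1, W, hWo, hW₁, hWcl.trans inter_subset_left,
    fun a b hab hW => ?_⟩
  exact (hWcl (subset_closure hW)).2 (intervalAvg_mem hC hconv hab (hint a b) fun t _ => (hφ t).2)

lemma exists_memClassACirc_intervalAvg_eq (h0open : IsOpen Ω₀) (hcl : closure Ω₁ ⊆ Ω₀)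
    {x y₀ y₁ : EuclideanSpace ℝ (Fin d)} (hy₀ : y₀ ∈ frontier Ω₀) (hy₁ : y₁ ∈ frontier Ω₀)
    (hseg : Disjoint (segment ℝ y₀ y₁) (closure Ω₁)) (hx : x ∈ openSegment ℝ y₀ y₁) :
    ∃ φ : ℝ → EuclideanSpace ℝ (Fin d), MemClassACirc Ω₀ Ω₁ φ ∧ intervalAvg 0 1 φ = x := by
  obtain ⟨a, lam, ha, hlam, hsum, rfl⟩ := hx
  obtain rfl : a = 1 - lam := eq_sub_of_add_eq hsum
  refine ⟨fractStep lam y₁ y₀, memClassACirc_of_forall_mem h0open hcl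
    (isClosed_segment y₀ y₁) (convex_segment y₀ y₁) hseg fractStep_periodic
    (fun _ _ => integrableOn_fractStep measure_Ioo_lt_top.ne) fun t => ?_, ?_⟩
  · rcases fractStep_eq_or lam y₁ y₀ t with h | h <;> rw [h]
    exacts [⟨hy₁, right_mem_segment ℝ y₀ y₁⟩, ⟨hy₀, left_mem_segment ℝ y₀ y₁⟩]
  · rw [intervalAvg, setIntegral_Ioo_fractStep hlam (by linarith), sub_zero, inv_one, one_smul,
      add_comm]

end Construction

section Chord

variable {d : ℕ} {Ω₀ Ω₁ : Set (EuclideanSpace ℝ (Fin d))} {x p n : EuclideanSpace ℝ (Fin d)}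

lemma ConeCondition.notMem_rayDirections (hcone : ConeCondition Ω₀ Ω₁) (h0open : IsOpen Ω₀)
    (h0conv : Convex ℝ Ω₀) (hsc1 : StrictConvex ℝ (closure Ω₁)) (hx : x ∈ Ω₀)
    (hp : p ∈ closure Ω₁) (hn : n ≠ 0) (hsupp : ∀ a ∈ closure Ω₁, ⟪n, a - p⟫ ≤ 0)
    (u : EuclideanSpace ℝ (Fin d)) (hu : u ≠ 0) (hperp : ⟪n, u⟫ = 0) :
    u ∉ rayDirections (closure Ω₀) x := by
  intro hray
  obtain ⟨y, hy⟩ := hcone x u hu (h0conv.rayDirections_closure_subset h0open hx hray)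
  have hpu : p + u ∈ closure Ω₁ := by
    simpa using hsc1.convex.rayDirections_subset isClosed_closure hp
      (rayDirections_mono subset_closure hy) 1 zero_le_one
  simpa [hperp] using hsc1.inner_sub_neg hp hpu (by simpa using hu) hn hsupp

lemma exists_inner_eq_zero_notMem_rayDirections_closure (hd : 2 ≤ d) (h0open : IsOpen Ω₀)
    (h0conv : Convex ℝ Ω₀) (h0proper : Ω₀ ≠ univ) (hsc0 : StrictConvex ℝ (closure Ω₀))
    (hsc1 : StrictConvex ℝ (closure Ω₁)) (hcone : d = 2 → ConeCondition Ω₀ Ω₁) (hx : x ∈ Ω₀)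
    (hp : p ∈ closure Ω₁) (hn : n ≠ 0) (hsupp : ∀ a ∈ closure Ω₁, ⟪n, a - p⟫ ≤ 0) :
    ∃ u, u ≠ 0 ∧ ⟪n, u⟫ = 0 ∧
      u ∉ rayDirections (closure Ω₀) x ∧ -u ∉ rayDirections (closure Ω₀) x := by
  rcases hd.eq_or_lt with rfl | hd
  · obtain ⟨u, hu, hperp⟩ := exists_ne_zero_inner_eq_zero (by simp) n
    have hray := (hcone rfl).notMem_rayDirections h0open h0conv hsc1 hx hp hn hsupp
    exact ⟨u, hu, hperp, hray u hu hperp, hray (-u) (neg_ne_zero.2 hu) (by simp [hperp])⟩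
  · exact exists_inner_eq_zero_notMem_rayDirections (by simpa using hd.nat_succ_le) hsc0
      isClosed_closure (h0conv.closure_ne_univ h0open h0proper) n x

lemma exists_frontier_chord (hd : 2 ≤ d) (h0open : IsOpen Ω₀) (h0conv : Convex ℝ Ω₀)
    (h0proper : Ω₀ ≠ univ) (h1ne : Ω₁.Nonempty) (hsc0 : StrictConvex ℝ (closure Ω₀))
    (hsc1 : StrictConvex ℝ (closure Ω₁)) (hcone : d = 2 → ConeCondition Ω₀ Ω₁) (hx : x ∈ Ω₀)
    (hx1 : x ∉ closure Ω₁) :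
    ∃ y₀ ∈ frontier Ω₀, ∃ y₁ ∈ frontier Ω₀,
      Disjoint (segment ℝ y₀ y₁) (closure Ω₁) ∧ x ∈ openSegment ℝ y₀ y₁ := by
  obtain ⟨p, hp, hsupp⟩ :=
    exists_inner_sub_nonpos (h1ne.mono subset_closure) isClosed_closure hsc1.convex x
  have hn : x - p ≠ 0 := sub_ne_zero.2 fun h => hx1 (h ▸ hp)
  obtain ⟨u, -, hperp, hu, hnu⟩ := exists_inner_eq_zero_notMem_rayDirections_closure hd h0open
    h0conv h0proper hsc0 hsc1 hcone hx hp hn hsupp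
  obtain ⟨a, ha, hya⟩ :=
    exists_pos_add_smul_mem_frontier h0open hx fun h => hu (rayDirections_mono subset_closure h)
  obtain ⟨b, hb, hyb⟩ :=
    exists_pos_add_smul_mem_frontier h0open hx fun h => hnu (rayDirections_mono subset_closure h)
  set H := {z | ⟪x - p, z⟫ = ⟪x - p, x⟫}
  have hH : Convex ℝ H := convex_hyperplane (innerₛₗ ℝ (x - p)).isLinear _
  have hHΩ₁ : Disjoint H (closure Ω₁) := by
    refine disjoint_left.2 fun z hz hz1 => ?_
    have := hsupp z hz1
    rw [inner_sub_right, hz, ← inner_sub_right, real_inner_self_eq_norm_sq] at this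
    exact (pow_pos (norm_pos_iff.2 hn) 2).not_ge this
  refine ⟨_, hya, _, hyb, hHΩ₁.mono_left (hH.segment_subset ?_ ?_),
    mem_openSegment_add_smul_add_smul_neg u ha hb⟩ <;>
    simp [H, inner_add_right, inner_smul_right, hperp]

end Chord

theorem statement2_general {d : ℕ} (hd : 2 ≤ d)
    (Ω₀ Ω₁ : Set (EuclideanSpace ℝ (Fin d)))
    (h0open : IsOpen Ω₀) (h0conv : Convex ℝ Ω₀)
    (h0proper : Ω₀ ≠ Set.univ)
    (h1ne : Ω₁.Nonempty)
    (hcl : closure Ω₁ ⊆ Ω₀)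
    (hsc0 : StrictConvex ℝ (closure Ω₀)) (hsc1 : StrictConvex ℝ (closure Ω₁))
    (hcone : d = 2 → ConeCondition Ω₀ Ω₁) :
    ∀ x ∈ closure Ω₀ \ closure Ω₁, ∃ φ : ℝ → EuclideanSpace ℝ (Fin d),
      MemClassACirc Ω₀ Ω₁ φ ∧ intervalAvg 0 1 φ = x := by
  rintro x ⟨hx0, hx1⟩
  by_cases hxΩ : x ∈ Ω₀
  · obtain ⟨y₀, hy₀, y₁, hy₁, hseg, hx⟩ :=
      exists_frontier_chord hd h0open h0conv h0proper h1ne hsc0 hsc1 hcone hxΩ hx1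
    exact exists_memClassACirc_intervalAvg_eq h0open hcl hy₀ hy₁ hseg hx
  · have hxfr : x ∈ frontier Ω₀ := by rw [h0open.frontier_eq]; exact ⟨hx0, hxΩ⟩
    refine exists_memClassACirc_intervalAvg_eq h0open hcl hxfr hxfr ?_ (by simp)
    simpa [segment_same] using hx1

/-- For every `x ∈ Ω* = cl Ω₀ \ cl Ω₁` there exists `φ ∈ A°` with `⟨φ⟩_𝕋 = x`. -/
theorem statement2 {d : ℕ} (hd : 2 ≤ d)
    (Ω₀ Ω₁ : Set (EuclideanSpace ℝ (Fin d)))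
    (h0open : IsOpen Ω₀) (h0conv : Convex ℝ Ω₀) (h0ne : Ω₀.Nonempty)
    (h0proper : Ω₀ ≠ Set.univ)
    (h1open : IsOpen Ω₁) (h1conv : Convex ℝ Ω₁) (h1ne : Ω₁.Nonempty)
    (hcl : closure Ω₁ ⊆ Ω₀)
    (hsc0 : StrictConvex ℝ (closure Ω₀)) (hsc1 : StrictConvex ℝ (closure Ω₁))
    (hcone : d = 2 → ConeCondition Ω₀ Ω₁) :
    ∀ x ∈ closure Ω₀ \ closure Ω₁, ∃ φ : ℝ → EuclideanSpace ℝ (Fin d),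
      MemClassACirc Ω₀ Ω₁ φ ∧ intervalAvg 0 1 φ = x :=
  statement2_general hd Ω₀ Ω₁ h0open h0conv h0proper h1ne hcl hsc0 hsc1 hcone
end
end

section
/- Let Ω₀ and Ω₁ satisfy the strict convexity condition and cl(Ω₁) ⊆ Ω₀. Then the cone condition holds if and only if for every open set Ω̃₁ with cl(Ω̃₁) ⊆ Ω₁ the function Δ(x) = sup{ max(1, |x−y|/|x−z|) : x ∈ [y,z], y ∈ Ω, z ∈ cl(Ω̃₁) } is uniformly bounded on every compact subset of Ω. -/
/-!
The segment lengths `‖x - y‖` are bounded over `x ∈ K`, `y ∈ cl Ω₀`, `z ∈ cl Ω̃₁` with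
`x ∈ [y, z]`; as `K` keeps a positive distance from `cl Ω̃₁`, this bounds `Δ`. Otherwise the unit
directions `e` from `x` to `y` converge along a subsequence to some `v`, and the far points `y`
make `v` a recession direction of `cl Ω₀`, hence of `Ω₀`, hence (cone condition) of `Ω₁`. Write
`z = x - s • e`. If `s` stays bounded, the limit point of `K` is reached from a point of
`cl Ω̃₁ ⊆ Ω₁` by moving along `v`, so it lies in `Ω₁`. If `s → ∞`, then `-v` is a recession
direction of `cl Ω₁` as well, so `cl Ω₁` contains a line, which no strictly convex closed proper
subset does.

Conversely, if every translate of a ray of `Ω₀` with direction `v` leaves `Ω₁`, take `z₀ ∈ Ω₁`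
and `z₀ + t₀ • v ∉ Ω₁`: the points `z₀ + s • v`, `s ≥ t₀`, lie in `Ω`, and
`Δ(z₀ + t₀ • v) ≥ (s - t₀) / t₀` is unbounded.
-/

noncomputable section

open Filter Metric Set Topology

section

variable {E : Type*} [NormedAddCommGroup E] [NormedSpace ℝ E] {C : Set E}

theorem Convex.add_smul_mem_of_tendsto {ι : Type*} {l : Filter ι} [l.NeBot]
    (hC : Convex ℝ C) (hCc : IsClosed C) {p a u : E} (hp : p ∈ C) {x w : ι → E} {c : ι → ℝ}
    (hx : Tendsto x l (𝓝 a)) (hc : Tendsto c l atTop) (hw : Tendsto w l (𝓝 u))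
    (hmem : ∀ᶠ i in l, x i + c i • w i ∈ C) {t : ℝ} (ht : 0 ≤ t) : p + t • u ∈ C := by
  have hx' : Tendsto (fun i => (c i)⁻¹ • (x i - p)) l (𝓝 0) := by
    simpa using (tendsto_inv_atTop_zero.comp hc).smul (hx.sub_const p)
  -- the point at parameter `t / c i` of the segment from `p` to `x i + c i • w i`
  have hlim : Tendsto (fun i => p + t • ((c i)⁻¹ • (x i - p) + w i)) l (𝓝 (p + t • u)) := by
    simpa using tendsto_const_nhds.add ((hx'.add hw).const_smul t)
  refine hCc.mem_of_tendsto hlim ?_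
  filter_upwards [hmem, hc.eventually_ge_atTop (max t 1)] with i hi hci
  have hc0 : 0 < c i := one_pos.trans_le ((le_max_right _ _).trans hci)
  have hseg := hC.add_smul_sub_mem hp hi
    ⟨div_nonneg ht hc0.le, div_le_one_of_le₀ ((le_max_left _ _).trans hci) hc0.le⟩
  convert hseg using 1
  match_scalars <;> field_simp

theorem Convex.add_smul_mem_of_ray (hC : Convex ℝ C) (hCc : IsClosed C) {p q v : E} (hp : p ∈ C)
    (hq : ∀ s : ℝ, 0 ≤ s → q + s • v ∈ C) {t : ℝ} (ht : 0 ≤ t) : p + t • v ∈ C :=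
  hC.add_smul_mem_of_tendsto hCc hp tendsto_const_nhds tendsto_id tendsto_const_nhds
    (eventually_ge_atTop 0 |>.mono hq) ht

theorem Convex.add_smul_mem_of_ray_closure (hC : Convex ℝ C) (hCo : IsOpen C) {p q v : E}
    (hp : p ∈ C) (hq : ∀ s : ℝ, 0 ≤ s → q + s • v ∈ closure C) {t : ℝ} (ht : 0 ≤ t) :
    p + t • v ∈ C := by
  have hfar := hC.closure.add_smul_mem_of_ray isClosed_closure (subset_closure hp) hq
    (mul_nonneg zero_le_two ht)
  have hmid := hC.add_smul_sub_mem_interior' hfar (hCo.interior_eq.symm ▸ hp)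
    (t := 1 / 2) ⟨by norm_num, by norm_num⟩
  rw [hCo.interior_eq] at hmid
  convert hmid using 1
  module

theorem Convex.add_smul_notMem_of_le (hC : Convex ℝ C) {p v : E} (hp : p ∈ C) {s t : ℝ}
    (hs : 0 ≤ s) (hst : s ≤ t) (hps : p + s • v ∉ C) : p + t • v ∉ C := by
  intro hpt
  rcases hs.eq_or_lt with rfl | hs
  · simp [hp] at hps
  refine hps ?_
  have := hC.add_smul_mem hp hpt ⟨div_nonneg hs.le (hs.trans_le hst).le,
    div_le_one_of_le₀ hst (hs.trans_le hst).le⟩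
  convert this using 1
  rw [smul_smul, div_mul_cancel₀ _ (hs.trans_le hst).ne']

theorem StrictConvex.eq_zero_of_forall_add_smul_mem (hC : StrictConvex ℝ C) (hCc : IsClosed C)
    (hCu : C ≠ univ) {p v : E} (hline : ∀ t : ℝ, p + t • v ∈ C) : v = 0 := by
  have hnotOpen : ¬ IsOpen C := fun hCo => hCu (IsClopen.eq_univ ⟨hCc, hCo⟩ ⟨_, hline 0⟩)
  obtain ⟨b, hb, hbint⟩ := not_subset.1 (mt subset_interior_iff_isOpen.1 hnotOpen)
  by_contra hv
  have hshift (s : ℝ) : b + s • v ∈ C := by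
    rcases le_total 0 s with hs | hs
    · exact hC.convex.add_smul_mem_of_ray hCc hb (fun r _ => hline r) hs
    · have := hC.convex.add_smul_mem_of_ray hCc hb (v := -v) (fun r _ => by
        simpa using hline (-r)) (neg_nonneg.2 hs)
      simpa using this
  have hne : b + (1 : ℝ) • v ≠ b + (-1 : ℝ) • v := by
    simpa [eq_neg_iff_add_eq_zero, ← two_smul ℝ] using hv
  have := hC (hshift 1) (hshift (-1)) hne (a := 1 / 2) (b := 1 / 2) (by norm_num) (by norm_num)
    (by norm_num)
  exact hbint (by convert this using 1; module)

theorem StrictConvex.eq_zero_of_tendsto_atTop_of_sub_smul_mem {ι : Type*} {l : Filter ι}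
    [l.NeBot] (hC : StrictConvex ℝ C) (hCc : IsClosed C) (hCu : C ≠ univ) {q a v : E}
    (hq : ∀ s : ℝ, 0 ≤ s → q + s • v ∈ C) {x V : ι → E} {S : ι → ℝ}
    (hx : Tendsto x l (𝓝 a)) (hV : Tendsto V l (𝓝 v)) (hS : Tendsto S l atTop)
    (hST : ∀ i, x i - S i • V i ∈ C) : v = 0 := by
  refine hC.eq_zero_of_forall_add_smul_mem hCc hCu (p := q) fun t => ?_
  rcases le_total 0 t with ht | ht
  · exact hq t ht
  · simpa using hC.convex.add_smul_mem_of_tendsto hCc (by simpa using hq 0 le_rfl) hx hS hV.neg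
      (.of_forall fun i => by simpa [← sub_eq_add_neg] using hST i) (neg_nonneg.2 ht)

theorem eq_sub_smul_of_mem_segment {x y z : E} (h : x ∈ segment ℝ y z) (hxy : x ≠ y) :
    z = x - ‖x - z‖ • ‖y - x‖⁻¹ • (y - x) := by
  have hray := (mem_segment_iff_sameRay.1 h).norm_smul_eq
  have hne : ‖x - y‖ ≠ 0 := norm_ne_zero_iff.2 (sub_ne_zero.2 hxy)
  have hzx : z - x = (‖z - x‖ * ‖x - y‖⁻¹) • (x - y) := by
    rw [mul_comm, ← smul_smul, ← hray, smul_smul, inv_mul_cancel₀ hne, one_smul]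
  rw [norm_sub_rev y x, norm_sub_rev x z, ← neg_sub x y, smul_neg, smul_neg, sub_neg_eq_add,
    smul_smul, ← hzx]
  abel

theorem mem_of_frequently_le_of_sub_smul_mem {Ω₁ T : Set E} (hT : IsClosed T) (hTΩ₁ : T ⊆ Ω₁)
    {a v : E} (hΩ₁v : ∀ w ∈ Ω₁, ∀ t : ℝ, 0 ≤ t → w + t • v ∈ Ω₁) {x V : ℕ → E} {S : ℕ → ℝ}
    (hx : Tendsto x atTop (𝓝 a)) (hV : Tendsto V atTop (𝓝 v)) (hS : ∀ n, 0 ≤ S n)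
    (hST : ∀ n, x n - S n • V n ∈ T) {M : ℝ} (hM : ∃ᶠ n in atTop, S n ≤ M) : a ∈ Ω₁ := by
  obtain ⟨ψ, hψ, hψM⟩ := extraction_of_frequently_atTop hM
  obtain ⟨s, hs, χ, hχ, hSlim⟩ :=
    isCompact_Icc.tendsto_subseq (fun n => (⟨hS _, hψM n⟩ : S (ψ n) ∈ Icc 0 M))
  have hsub := (hψ.comp hχ).tendsto_atTop
  have hlim : Tendsto (fun n => x (ψ (χ n)) - S (ψ (χ n)) • V (ψ (χ n))) atTop
      (𝓝 (a - s • v)) :=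
    (hx.comp hsub).sub (hSlim.smul (hV.comp hsub))
  simpa using hΩ₁v _ (hTΩ₁ (hT.mem_of_tendsto hlim (.of_forall fun n => hST _))) s hs.1

theorem exists_forall_norm_sub_le_of_cone [ProperSpace E] {Ω₀ Ω₁ T K : Set E}
    (h0open : IsOpen Ω₀) (h0conv : Convex ℝ Ω₀) (h0proper : Ω₀ ≠ univ)
    (h1open : IsOpen Ω₁) (h1conv : Convex ℝ Ω₁) (h1ne : Ω₁.Nonempty) (hcl : closure Ω₁ ⊆ Ω₀)
    (hsc1 : StrictConvex ℝ (closure Ω₁))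
    (hcone : ∀ x v : E, v ≠ 0 → (∀ t : ℝ, 0 ≤ t → x + t • v ∈ Ω₀) →
      ∃ y : E, ∀ t : ℝ, 0 ≤ t → y + t • v ∈ Ω₁)
    (hT : IsClosed T) (hTΩ₁ : T ⊆ Ω₁) (hK : IsCompact K) (hKΩ₁ : Disjoint K Ω₁) :
    ∃ R : ℝ, ∀ x ∈ K, ∀ y ∈ closure Ω₀, ∀ z ∈ T, x ∈ segment ℝ y z → ‖x - y‖ ≤ R := by
  by_contra! hunb
  choose x hxK y hy z hz hseg hlt using fun n : ℕ => hunb n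
  obtain ⟨p, hp⟩ := h1ne
  set V : ℕ → E := fun n => ‖y n - x n‖⁻¹ • (y n - x n)
  have hxy (n : ℕ) : 0 < ‖y n - x n‖ := by
    rw [norm_sub_rev]; exact (Nat.cast_nonneg n).trans_lt (hlt n)
  have hV (n : ℕ) : V n ∈ sphere (0 : E) 1 := by
    simp [V, norm_smul, (hxy n).ne']
  have hz_eq (n : ℕ) : z n = x n - ‖x n - z n‖ • V n :=
    eq_sub_smul_of_mem_segment (hseg n) (sub_ne_zero.1 (norm_pos_iff.1 (hxy n))).symm
  obtain ⟨⟨a, v⟩, ⟨haK, hv⟩, φ, hφ, hlim⟩ :=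
    (hK.prod (isCompact_sphere (0 : E) 1)).tendsto_subseq (x := fun n => (x n, V n))
      fun n => ⟨hxK n, hV n⟩
  have hxφ : Tendsto (x ∘ φ) atTop (𝓝 a) := (continuous_fst.tendsto _).comp hlim
  have hVφ : Tendsto (V ∘ φ) atTop (𝓝 v) := (continuous_snd.tendsto _).comp hlim
  have hv0 : v ≠ 0 := ne_zero_of_mem_unit_sphere ⟨v, hv⟩
  have hlen : Tendsto (fun n => ‖y (φ n) - x (φ n)‖) atTop atTop := by
    refine tendsto_atTop_mono (fun n => ?_) tendsto_natCast_atTop_atTop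
    rw [norm_sub_rev]
    exact (Nat.cast_le.2 (hφ.id_le n)).trans (hlt _).le
  have hpΩ₀ : p ∈ Ω₀ := hcl (subset_closure hp)
  have hΩ₀v : ∀ t : ℝ, 0 ≤ t → p + t • v ∈ Ω₀ := fun t ht =>
    h0conv.add_smul_mem_of_ray_closure h0open hpΩ₀ (q := p) (fun s hs =>
      h0conv.closure.add_smul_mem_of_tendsto isClosed_closure (subset_closure hpΩ₀) hxφ hlen hVφ
        (.of_forall fun n => by simpa [V, smul_smul, (hxy _).ne'] using hy (φ n)) hs) ht
  obtain ⟨q, hq⟩ := hcone p v hv0 hΩ₀v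
  have hqcl : ∀ s : ℝ, 0 ≤ s → q + s • v ∈ closure Ω₁ := fun s hs => subset_closure (hq s hs)
  by_cases hS : Tendsto (fun n => ‖x (φ n) - z (φ n)‖) atTop atTop
  · exact hv0 (hsc1.eq_zero_of_tendsto_atTop_of_sub_smul_mem isClosed_closure
      (fun h => h0proper (eq_univ_of_univ_subset (h ▸ hcl))) hqcl hxφ hVφ hS
      fun n => by simpa [← hz_eq] using subset_closure (hTΩ₁ (hz (φ n))))
  · obtain ⟨M, hM⟩ : ∃ M, ∃ᶠ n in atTop, ‖x (φ n) - z (φ n)‖ < M := by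
      simpa only [Filter.tendsto_atTop, not_forall, not_eventually, not_le] using hS
    refine hKΩ₁.notMem_of_mem_left haK (mem_of_frequently_le_of_sub_smul_mem hT hTΩ₁
      (fun w hw t ht => h1conv.add_smul_mem_of_ray_closure h1open hw hqcl ht) hxφ hVφ
      (fun n => norm_nonneg _) (fun n => ?_) (hM.mono fun _ => le_of_lt))
    simpa [← hz_eq] using hz (φ n)

theorem exists_add_smul_mem_of_bounded_ratio {Ω₀ Ω₁ : Set E} (h0open : IsOpen Ω₀)
    (h0conv : Convex ℝ Ω₀) (h1open : IsOpen Ω₁) (h1conv : Convex ℝ Ω₁) (h1ne : Ω₁.Nonempty) (hcl : closure Ω₁ ⊆ Ω₀)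
    (H : ∀ Ωt₁ : Set E, IsOpen Ωt₁ → closure Ωt₁ ⊆ Ω₁ →
      ∀ K : Set E, K ⊆ closure Ω₀ \ Ω₁ → IsCompact K →
        ∃ C : ℝ, ∀ x ∈ K, ∀ y ∈ closure Ω₀ \ Ω₁, ∀ z ∈ closure Ωt₁,
          x ∈ segment ℝ y z → max 1 (‖x - y‖ / ‖x - z‖) ≤ C)
    (x v : E) (hv : v ≠ 0) (hray : ∀ t : ℝ, 0 ≤ t → x + t • v ∈ Ω₀) :
    ∃ y : E, ∀ t : ℝ, 0 ≤ t → y + t • v ∈ Ω₁ := by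
  by_contra! hno
  obtain ⟨z₀, hz₀⟩ := h1ne
  obtain ⟨t₀, ht₀, hout⟩ := hno z₀
  have ht₀pos : 0 < t₀ := ht₀.lt_of_ne (by rintro rfl; simp [hz₀] at hout)
  have hΩ (t : ℝ) (ht : t₀ ≤ t) : z₀ + t • v ∈ closure Ω₀ \ Ω₁ :=
    ⟨subset_closure (h0conv.add_smul_mem_of_ray_closure h0open (hcl (subset_closure hz₀))
      (fun s hs => subset_closure (hray s hs)) (ht₀.trans ht)),
      h1conv.add_smul_notMem_of_le hz₀ ht₀ ht hout⟩
  obtain ⟨r, hr, hball⟩ := Metric.isOpen_iff.1 h1open z₀ hz₀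
  obtain ⟨C, hC⟩ := H (ball z₀ (r / 2)) isOpen_ball
    (closure_ball_subset_closedBall.trans ((closedBall_subset_ball (by linarith)).trans hball))
    {z₀ + t₀ • v} (singleton_subset_iff.2 (hΩ t₀ le_rfl)) isCompact_singleton
  set s := t₀ * (|C| + 2)
  have hs : t₀ ≤ s := le_mul_of_one_le_right ht₀ (by linarith [abs_nonneg C])
  have hseg : z₀ + t₀ • v ∈ segment ℝ (z₀ + s • v) z₀ := by
    rw [segment_symm, segment_eq_image']
    refine ⟨t₀ / s, ⟨by positivity, div_le_one_of_le₀ hs (ht₀.trans hs)⟩, ?_⟩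
    simp [smul_smul, div_mul_cancel₀ _ (ht₀pos.trans_le hs).ne']
  have hratio : ‖z₀ + t₀ • v - (z₀ + s • v)‖ / ‖z₀ + t₀ • v - z₀‖ = |C| + 1 := by
    rw [show z₀ + t₀ • v - (z₀ + s • v) = -((s - t₀) • v) by module, add_sub_cancel_left,
      norm_neg, norm_smul, norm_smul, Real.norm_of_nonneg (sub_nonneg.2 hs),
      Real.norm_of_nonneg ht₀]
    field_simp
    ring
  have := (le_max_right _ _).trans
    (hC _ rfl _ (hΩ s hs) z₀ (subset_closure (mem_ball_self (half_pos hr))) hseg)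
  linarith [le_abs_self C]

end

theorem statement8_general {d : ℕ}
    (Ω₀ Ω₁ : Set (EuclideanSpace ℝ (Fin d)))
    (h0open : IsOpen Ω₀) (h0conv : Convex ℝ Ω₀)
    (h0proper : Ω₀ ≠ Set.univ)
    (h1open : IsOpen Ω₁) (h1conv : Convex ℝ Ω₁) (h1ne : Ω₁.Nonempty)
    (hcl : closure Ω₁ ⊆ Ω₀)
    (hsc1 : StrictConvex ℝ (closure Ω₁)) :
    ConeCondition Ω₀ Ω₁ ↔
      ∀ Ωt₁ : Set (EuclideanSpace ℝ (Fin d)), IsOpen Ωt₁ → closure Ωt₁ ⊆ Ω₁ →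
        ∀ K : Set (EuclideanSpace ℝ (Fin d)), K ⊆ closure Ω₀ \ Ω₁ → IsCompact K →
          ∃ C : ℝ, ∀ x ∈ K, ∀ y ∈ closure Ω₀ \ Ω₁, ∀ z ∈ closure Ωt₁,
            x ∈ segment ℝ y z → max 1 (‖x - y‖ / ‖x - z‖) ≤ C := by
  refine ⟨fun hcone Ωt₁ _ htsub K hKsub hK => ?_,
    exists_add_smul_mem_of_bounded_ratio h0open h0conv h1open h1conv h1ne hcl⟩
  have hKΩ₁ : Disjoint K Ω₁ := disjoint_left.2 fun x hx => (hKsub hx).2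
  obtain ⟨R, hR⟩ := exists_forall_norm_sub_le_of_cone h0open h0conv h0proper h1open h1conv h1ne
    hcl hsc1 hcone isClosed_closure htsub hK hKΩ₁
  obtain ⟨δ, hδ, hδK⟩ := exists_pos_forall_lt_edist hK isClosed_closure
    (hKΩ₁.mono_right htsub)
  refine ⟨max 1 (R / δ), fun x hx y hy z hz hxyz => max_le_max le_rfl ?_⟩
  have hxz : (δ : ℝ) ≤ ‖x - z‖ := by
    have := hδK x hx z hz
    rw [edist_nndist, ENNReal.coe_lt_coe, ← NNReal.coe_lt_coe, coe_nndist, dist_eq_norm] at this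
    exact this.le
  calc ‖x - y‖ / ‖x - z‖ ≤ ‖x - y‖ / δ := div_le_div_of_nonneg_left (norm_nonneg _) hδ hxz
    _ ≤ R / δ := div_le_div_of_nonneg_right (hR x hx y hy.1 z hz hxyz) δ.2

/-- The cone condition holds if and only if for every open set `Ωt₁` with `cl Ωt₁ ⊆ Ω₁`,
the function `Δ(x) = sup { max(1, |x−y|/|x−z|) : x ∈ [y,z], y ∈ Ω, z ∈ cl Ωt₁ }` is
uniformly bounded on every compact subset of `Ω = cl Ω₀ \ Ω₁`. -/
theorem statement8 {d : ℕ} (hd : 2 ≤ d)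
    (Ω₀ Ω₁ : Set (EuclideanSpace ℝ (Fin d)))
    (h0open : IsOpen Ω₀) (h0conv : Convex ℝ Ω₀) (h0ne : Ω₀.Nonempty)
    (h0proper : Ω₀ ≠ Set.univ)
    (h1open : IsOpen Ω₁) (h1conv : Convex ℝ Ω₁) (h1ne : Ω₁.Nonempty)
    (hcl : closure Ω₁ ⊆ Ω₀)
    (hsc0 : StrictConvex ℝ (closure Ω₀)) (hsc1 : StrictConvex ℝ (closure Ω₁)) :
    ConeCondition Ω₀ Ω₁ ↔
      ∀ Ωt₁ : Set (EuclideanSpace ℝ (Fin d)), IsOpen Ωt₁ → closure Ωt₁ ⊆ Ω₁ →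
        ∀ K : Set (EuclideanSpace ℝ (Fin d)), K ⊆ closure Ω₀ \ Ω₁ → IsCompact K →
          ∃ C : ℝ, ∀ x ∈ K, ∀ y ∈ closure Ω₀ \ Ω₁, ∀ z ∈ closure Ωt₁,
            x ∈ segment ℝ y z → max 1 (‖x - y‖ / ‖x - z‖) ≤ C :=
  statement8_general Ω₀ Ω₁ h0open h0conv h0proper h1open h1conv h1ne hcl hsc1
end
end
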